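/- Strong left invariance of the left integral: for all a, b ∈ A, S((id ⊗ φ)(Δ(a)(1 ⊗ b))) = (id ⊗ φ)((1 ⊗ a)Δ(b)); in Sweedler notation, S(Σ a₍₁₎ φ(a₍₂₎ b)) = Σ b₍₁₎ φ(a b₍₂₎). -/

import Mathlib

/-!
Apply left invariance to `a₍₂₎ b`: `φ(a₍₂₎ b) · 1 = Σ a₍₂₎ b₍₁₎ φ(a₍₃₎ b₍₂₎)`. Multiplying by
`S(a₍₁₎)` on the left and summing, the Hopf identity `Σ S(a₍₁₎) a₍₂₎ ⊗ a₍₃₎ = 1 ⊗ a`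
(coassociativity followed by the antipode axiom) collapses the right-hand side to
`Σ b₍₁₎ φ(a b₍₂₎)`.
-/

open TensorProduct Coalgebra HopfAlgebra

section Slice

variable {R M N : Type*} [CommSemiring R] [AddCommMonoid M] [Module R M]
  [AddCommMonoid N] [Module R N]

noncomputable def sliceRight (φ : N →ₗ[R] R) : M ⊗[R] N →ₗ[R] M :=
  (TensorProduct.rid R M).toLinearMap ∘ₗ φ.lTensor M

@[simp]
lemma sliceRight_tmul (φ : N →ₗ[R] R) (m : M) (n : N) : sliceRight φ (m ⊗ₜ n) = φ n • m := by
  simp [sliceRight]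

lemma sliceRight_tmul_one_mul {A B : Type*} [Semiring A] [Algebra R A] [Semiring B] [Algebra R B]
    (φ : B →ₗ[R] R) (c : A) (w : A ⊗[R] B) :
    sliceRight φ ((c ⊗ₜ 1) * w) = c * sliceRight φ w := by
  induction w using TensorProduct.induction_on with
  | zero => simp
  | tmul x y => simp
  | add x y hx hy => simp only [mul_add, map_add, hx, hy]

end Slice

section Hopf

variable {R A : Type*} [CommSemiring R] [Semiring A] [HopfAlgebra R A]

lemma sum_antipode_tmul_one_mul_comul_eq_one_tmul {ι : Type*} {a : A} (𝓡 : Repr R a ι) :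
    ∑ i ∈ 𝓡.index, (antipode R (𝓡.left i) ⊗ₜ[R] (1 : A)) * comul (𝓡.right i) = 1 ⊗ₜ a := by
  let 𝓡l := fun i => ℛ R (𝓡.left i)
  let 𝓡r := fun i => ℛ R (𝓡.right i)
  calc ∑ i ∈ 𝓡.index, (antipode R (𝓡.left i) ⊗ₜ[R] (1 : A)) * comul (𝓡.right i)
      = ∑ i ∈ 𝓡.index, ∑ j ∈ (𝓡r i).index,
          (antipode R (𝓡.left i) * (𝓡r i).left j) ⊗ₜ[R] (𝓡r i).right j := by
        refine Finset.sum_congr rfl fun i _ => ?_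
        simp only [← (𝓡r i).eq, Finset.mul_sum, Algebra.TensorProduct.tmul_mul_tmul, one_mul]
    _ = ∑ i ∈ 𝓡.index, (∑ j ∈ (𝓡l i).index,
          antipode R ((𝓡l i).left j) * (𝓡l i).right j) ⊗ₜ[R] 𝓡.right i := by
        have := congr(((LinearMap.mul' R A ∘ₗ (antipode R).rTensor A).rTensor A ∘ₗ
          (TensorProduct.assoc R A A A).symm.toLinearMap) $(sum_tmul_tmul_eq 𝓡 𝓡l 𝓡r))
        simpa [map_sum, TensorProduct.sum_tmul] using this.symm
    _ = ∑ i ∈ 𝓡.index, (counit (R := R) (𝓡.left i) • (1 : A)) ⊗ₜ[R] 𝓡.right i := by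
        simp only [sum_antipode_mul_eq_smul]
    _ = 1 ⊗ₜ a := by
        simp only [TensorProduct.smul_tmul, ← TensorProduct.tmul_sum, sum_counit_smul]

def IsLeftIntegral (φ : A →ₗ[R] R) : Prop :=
  ∀ a : A, sliceRight φ (comul (R := R) a) = φ a • (1 : A)

theorem IsLeftIntegral.antipode_sliceRight_comul_mul {φ : A →ₗ[R] R} (hφ : IsLeftIntegral φ)
    (a b : A) :
    antipode R (sliceRight φ (comul a * (1 ⊗ₜ b))) = sliceRight φ ((1 ⊗ₜ a) * comul b) := by
  let 𝓡 := ℛ R a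
  calc antipode R (sliceRight φ (comul a * (1 ⊗ₜ b)))
      = ∑ i ∈ 𝓡.index, antipode R (𝓡.left i) * (φ (𝓡.right i * b) • 1) := by
        simp [← 𝓡.eq, Finset.sum_mul, Algebra.TensorProduct.tmul_mul_tmul]
    _ = ∑ i ∈ 𝓡.index,
          sliceRight φ ((antipode R (𝓡.left i) ⊗ₜ 1) * comul (𝓡.right i) * comul b) := by
        refine Finset.sum_congr rfl fun i _ => ?_
        rw [mul_assoc, sliceRight_tmul_one_mul, ← Bialgebra.comul_mul, hφ]
    _ = sliceRight φ ((1 ⊗ₜ a) * comul b) := by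
        rw [← map_sum, ← Finset.sum_mul, sum_antipode_tmul_one_mul_comul_eq_one_tmul]

end Hopf

theorem strong_left_invariance_general
    {A : Type*} [Ring A] [HopfAlgebra ℂ A]
    (φ : A →ₗ[ℂ] ℂ)
    (hφL : ∀ a : A,
      (TensorProduct.rid ℂ A) (LinearMap.lTensor A φ (Coalgebra.comul a)) = φ a • (1 : A)) :
    ∀ a b : A,
      antipode (R := ℂ)
          ((TensorProduct.rid ℂ A)
            (LinearMap.lTensor A φ (Coalgebra.comul (R := ℂ) a * (1 ⊗ₜ[ℂ] b)))) =
        (TensorProduct.rid ℂ A)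
          (LinearMap.lTensor A φ ((1 ⊗ₜ[ℂ] a) * Coalgebra.comul (R := ℂ) b)) :=
  IsLeftIntegral.antipode_sliceRight_comul_mul (φ := φ) hφL

/-- Strong left invariance of the left integral: for all `a b ∈ A`,
`S((id ⊗ φ)(Δ(a)(1 ⊗ b))) = (id ⊗ φ)((1 ⊗ a)Δ(b))`. -/
theorem strong_left_invariance
    {A : Type*} [Ring A] [HopfAlgebra ℂ A]
    (hS : Function.Bijective (antipode (R := ℂ) (A := A)))
    (φ : A →ₗ[ℂ] ℂ) (hφ0 : φ ≠ 0)
    (hφL : ∀ a : A,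
      (TensorProduct.rid ℂ A) (LinearMap.lTensor A φ (Coalgebra.comul a)) = φ a • (1 : A)) :
    ∀ a b : A,
      antipode (R := ℂ)
          ((TensorProduct.rid ℂ A)
            (LinearMap.lTensor A φ (Coalgebra.comul (R := ℂ) a * (1 ⊗ₜ[ℂ] b)))) =
        (TensorProduct.rid ℂ A)
          (LinearMap.lTensor A φ ((1 ⊗ₜ[ℂ] a) * Coalgebra.comul (R := ℂ) b)) :=
  strong_left_invariance_general φ hφL
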